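/- arXiv:2204.02745 — 5 statements merged into one kernel-verified Lean document; each statement's English description precedes it below -/
import Mathlib

section
/- Let v : ℂ → ℂ be holomorphic on a neighborhood of the closed unit disk such that Re(conj(z) * v(z)) < 0 for all z with |z| = 1. Then there exists a ∈ ℂ with |a| < 1 such that v(a) = 0. -/
/-!
If `v` had no zero in the open disk, the inward-pointing condition would keep it nonzero on the
circle too, so `1 / v` would be holomorphic on the closed disk and `∮ dz / v(z) = 0` by Cauchy's
theorem. With `z = e^{iθ}` this integral is `i ∫ z / v(z) dθ`, and `Re (z / v z)` has the sign of
`Re (z̄ v z) < 0`, so its real part is strictly negative.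
-/

open Complex ComplexConjugate Metric

theorem re_mul_inv_neg_of_re_conj_mul_neg {z w : ℂ} (h : (conj z * w).re < 0) :
    (z * w⁻¹).re < 0 := by
  have hw : w ≠ 0 := by rintro rfl; simp at h
  have hre : (z * conj w).re = (conj z * w).re := by
    rw [← conj_re, map_mul, conj_conj]
  rw [inv_def, ← mul_assoc, re_mul_ofReal, hre]
  exact mul_neg_of_neg_of_pos h (inv_pos.2 (normSq_pos.2 hw))

theorem re_intervalIntegral_neg_of_re_neg {g : ℝ → ℂ} {a b : ℝ} (hab : a < b)
    (hg : IntervalIntegrable g MeasureTheory.volume a b) (hneg : ∀ x, (g x).re < 0) :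
    (∫ x in a..b, g x).re < 0 := by
  have hre : (∫ x in a..b, g x).re = ∫ x in a..b, (g x).re :=
    (reCLM.intervalIntegral_comp_comm hg).symm
  have hg_re : IntervalIntegrable (fun x => (g x).re) MeasureTheory.volume a b :=
    ⟨hg.1.re, hg.2.re⟩
  have hpos : 0 < ∫ x in a..b, -(g x).re :=
    intervalIntegral.intervalIntegral_pos_of_pos hg_re.neg (fun x => neg_pos.2 (hneg x)) hab
  rw [intervalIntegral.integral_neg] at hpos
  linarith

theorem circleIntegral_eq_I_mul_intervalIntegral (f : ℂ → ℂ) (c : ℂ) (R : ℝ) :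
    (∮ z in C(c, R), f z) =
      I * ∫ θ in (0 : ℝ)..2 * Real.pi, (circleMap c R θ - c) * f (circleMap c R θ) := by
  rw [circleIntegral, ← intervalIntegral.integral_const_mul]
  refine intervalIntegral.integral_congr fun θ _ => ?_
  simp only [deriv_circleMap, circleMap_sub_center, smul_eq_mul]
  ring

theorem circleIntegral_ne_zero_of_re_sub_mul_neg {f : ℂ → ℂ} {c : ℂ} {R : ℝ} (hR : 0 < R)
    (hf : ContinuousOn f (sphere c R)) (hneg : ∀ z ∈ sphere c R, ((z - c) * f z).re < 0) :
    (∮ z in C(c, R), f z) ≠ 0 := by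
  have hcont : Continuous fun θ => (circleMap c R θ - c) * f (circleMap c R θ) :=
    ((continuous_circleMap c R).sub continuous_const).mul
      (hf.comp_continuous (continuous_circleMap c R) (circleMap_mem_sphere c hR.le))
  have hre := re_intervalIntegral_neg_of_re_neg Real.two_pi_pos (hcont.intervalIntegrable _ _)
    fun θ => hneg _ (circleMap_mem_sphere c hR.le θ)
  rw [circleIntegral_eq_I_mul_intervalIntegral]
  exact mul_ne_zero I_ne_zero fun h => hre.ne (by rw [h, zero_re])

theorem markovian_vector_field_has_zero_general
    (v : ℂ → ℂ) (U : Set ℂ)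
    (hsub : closedBall (0 : ℂ) 1 ⊆ U)
    (hv : DifferentiableOn ℂ v U)
    (hb : ∀ z : ℂ, ‖z‖ = 1 → ((starRingEnd ℂ) z * v z).re < 0) :
    ∃ a : ℂ, ‖a‖ < 1 ∧ v a = 0 := by
  by_contra! h
  have hne : ∀ z ∈ closedBall (0 : ℂ) 1, v z ≠ 0 := fun z hz => by
    rcases (mem_closedBall_zero_iff.1 hz).lt_or_eq with hlt | heq
    · exact h z hlt
    · intro h0
      simpa [h0] using hb z heq
  have hinv : DifferentiableOn ℂ (fun z => (v z)⁻¹) (closedBall 0 1) := (hv.mono hsub).inv hne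
  refine circleIntegral_ne_zero_of_re_sub_mul_neg one_pos
    (hinv.continuousOn.mono sphere_subset_closedBall) (fun z hz => ?_)
    ((hinv.diffContOnCl_ball subset_rfl).circleIntegral_eq_zero zero_le_one)
  rw [sub_zero]
  exact re_mul_inv_neg_of_re_conj_mul_neg (hb z (mem_sphere_zero_iff_norm.1 hz))

/-- A holomorphic vector field on a neighborhood of the closed unit disk that points
strictly inward on the unit circle has a zero in the open unit disk. -/
theorem markovian_vector_field_has_zero
    (v : ℂ → ℂ) (U : Set ℂ) (hU : IsOpen U)
    (hsub : closedBall (0 : ℂ) 1 ⊆ U)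
    (hv : DifferentiableOn ℂ v U)
    (hb : ∀ z : ℂ, ‖z‖ = 1 → ((starRingEnd ℂ) z * v z).re < 0) :
    ∃ a : ℂ, ‖a‖ < 1 ∧ v a = 0 :=
  markovian_vector_field_has_zero_general v U hsub hv hb
end

section
/- Let v be holomorphic on a neighborhood of the closed unit disk with v(0) = 0 and Re(conj(z) * v(z)) < 0 for all |z| = 1. Then there exists c > 0 such that Re(v(z)/z) ≤ -c for all z with 0 < |z| ≤ 1. -/
open Complex Metric

/-- If `v` is holomorphic near the closed unit disk, `v 0 = 0`, and `Re(z̄ v z) < 0` on the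
unit circle, then `Re(v z / z) ≤ -c` on the punctured closed disk, for some `c > 0`. -/
theorem markovian_vector_field_strict_contraction
    (v : ℂ → ℂ) (U : Set ℂ) (hU : IsOpen U)
    (hsub : closedBall (0 : ℂ) 1 ⊆ U)
    (hv : DifferentiableOn ℂ v U)
    (h0 : v 0 = 0)
    (hb : ∀ z : ℂ, ‖z‖ = 1 → ((starRingEnd ℂ) z * v z).re < 0) :
    ∃ c : ℝ, 0 < c ∧ ∀ z : ℂ, 0 < ‖z‖ → ‖z‖ ≤ 1 → (v z / z).re ≤ -c := by
  set g : ℂ → ℂ := dslope v 0 with hg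
  have hgz : ∀ z : ℂ, z ≠ 0 → g z = v z / z := by
    intro z hz
    rw [hg, dslope_of_ne _ hz, slope_def_field, h0]
    simp [div_eq_mul_inv]
  have hgU : DifferentiableOn ℂ g U := by
    rw [hg, Complex.differentiableOn_dslope (hU.mem_nhds (hsub (by simp)))]
    exact hv
  -- boundary bound by compactness
  have hK : IsCompact (sphere (0 : ℂ) 1) := isCompact_sphere _ _
  have hsphere_sub : sphere (0 : ℂ) 1 ⊆ U := fun z hz => hsub (sphere_subset_closedBall hz)
  have hcont : ContinuousOn (fun z : ℂ => ((starRingEnd ℂ) z * v z).re) (sphere 0 1) := by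
    apply Complex.continuous_re.comp_continuousOn
    exact (Complex.continuous_conj.continuousOn.mul (hv.continuousOn.mono hsphere_sub))
  obtain ⟨z₀, hz₀, hmax⟩ := hK.exists_isMaxOn ⟨1, by simp⟩ hcont
  have hz₀norm : ‖z₀‖ = 1 := by simpa using hz₀
  set c : ℝ := -((starRingEnd ℂ) z₀ * v z₀).re with hc
  have hcpos : 0 < c := by
    have := hb z₀ hz₀norm; linarith
  refine ⟨c, hcpos, ?_⟩
  -- on the circle, Re (g z) ≤ -c
  have hbdry : ∀ z ∈ sphere (0 : ℂ) 1, (g z).re ≤ -c := by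
    intro z hz
    have hznorm : ‖z‖ = 1 := by simpa using hz
    have hzne : z ≠ 0 := by
      intro h; rw [h] at hznorm; simp at hznorm
    have : g z = (starRingEnd ℂ) z * v z := by
      rw [hgz z hzne, div_eq_inv_mul, Complex.inv_eq_conj hznorm]
    rw [this, hc, neg_neg]
    exact hmax hz
  -- maximum principle via exp
  have hmp : ∀ z ∈ closedBall (0 : ℂ) 1, ‖Complex.exp (g z)‖ ≤ Real.exp (-c) := by
    intro z hz
    have hcl : closure (ball (0 : ℂ) 1) = closedBall 0 1 := closure_ball 0 one_ne_zero
    refine Complex.norm_le_of_forall_mem_frontier_norm_le (f := fun w => Complex.exp (g w))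
      isBounded_ball ?_ ?_ (by rwa [hcl])
    · refine DifferentiableOn.diffContOnCl ?_
      exact Complex.differentiable_exp.comp_differentiableOn
        (hgU.mono (by rw [hcl]; exact hsub))
    · intro w hw
      rw [frontier_ball 0 one_ne_zero] at hw
      rw [Complex.norm_exp]
      exact Real.exp_le_exp.mpr (hbdry w hw)
  intro z hz0 hz1
  have hzne : z ≠ 0 := by simpa [norm_pos_iff] using hz0
  have hzcb : z ∈ closedBall (0 : ℂ) 1 := by simpa [mem_closedBall] using hz1
  have := hmp z hzcb
  rw [Complex.norm_exp, Real.exp_le_exp, hgz z hzne] at this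
  exact this
end

section
/- Let v be holomorphic on the open unit disk with v(0) = 0, and suppose there exists c > 0 such that Re(v(z)/z) ≤ -c for all z in the punctured disk. Let f_t(z) be the solution of the ODE ∂_t f_t(z) = v(f_t(z)) with f_0(z) = z, for z in the open unit disk. Then the flow is defined for all t ≥ 0 and satisfies |f_t(z)| ≤ e^{-ct} |z| for all t ≥ 0 and |z| < 1. -/
open Complex Metric

/-- Exponential contraction of the flow of a holomorphic vector field on the unit disk with
`v 0 = 0` and `Re (v z / z) ≤ -c`: the flow satisfies `‖f_t z‖ ≤ e^{-ct} ‖z‖`. -/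
theorem flow_exponential_contraction
    (v : ℂ → ℂ) (hv : DifferentiableOn ℂ v (ball (0 : ℂ) 1))
    (h0 : v 0 = 0) (c : ℝ) (hc : 0 < c)
    (hneg : ∀ z : ℂ, 0 < ‖z‖ → ‖z‖ < 1 → (v z / z).re ≤ -c)
    (f : ℝ → ℂ → ℂ)
    (hf0 : ∀ z ∈ ball (0 : ℂ) 1, f 0 z = z)
    (hmem : ∀ z ∈ ball (0 : ℂ) 1, ∀ t : ℝ, 0 ≤ t → f t z ∈ ball (0 : ℂ) 1)
    (hode : ∀ z ∈ ball (0 : ℂ) 1, ∀ t : ℝ, 0 ≤ t →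
      HasDerivAt (fun s : ℝ => f s z) (v (f t z)) t) :
    ∀ z ∈ ball (0 : ℂ) 1, ∀ t : ℝ, 0 ≤ t → ‖f t z‖ ≤ Real.exp (-c * t) * ‖z‖ := by
  intro z hz t ht
  set F : ℝ → ℝ := fun s => Real.exp (2 * c * s) * Complex.normSq (f s z) with hF
  -- derivative of F at each s ≥ 0
  have hFderiv : ∀ s : ℝ, 0 ≤ s → HasDerivAt F
      (Real.exp (2 * c * s) * (2 * c * Complex.normSq (f s z)
        + 2 * ((f s z).re * (v (f s z)).re + (f s z).im * (v (f s z)).im))) s := by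
    intro s hs
    have h := hode z hz s hs
    have hre : HasDerivAt (fun u : ℝ => (f u z).re) ((v (f s z)).re) s :=
      (Complex.reCLM.hasFDerivAt.comp_hasDerivAt s h)
    have him : HasDerivAt (fun u : ℝ => (f u z).im) ((v (f s z)).im) s :=
      (Complex.imCLM.hasFDerivAt.comp_hasDerivAt s h)
    have hg : HasDerivAt (fun u : ℝ => Complex.normSq (f u z))
        (2 * ((f s z).re * (v (f s z)).re + (f s z).im * (v (f s z)).im)) s := by
      have := (hre.mul hre).add (him.mul him)
      simp only [Complex.normSq_apply]
      exact this.congr_deriv (by ring)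
    have hexp : HasDerivAt (fun u : ℝ => Real.exp (2 * c * u))
        (Real.exp (2 * c * s) * (2 * c)) s := by
      have h2 : HasDerivAt (fun u : ℝ => 2 * c * u) (2 * c) s := by
        simpa using (hasDerivAt_id s).const_mul (2 * c)
      exact h2.exp
    have := hexp.mul hg
    exact this.congr_deriv (by ring)
  -- the derivative is nonpositive
  have hnonpos : ∀ s : ℝ, 0 ≤ s →
      Real.exp (2 * c * s) * (2 * c * Complex.normSq (f s z)
        + 2 * ((f s z).re * (v (f s z)).re + (f s z).im * (v (f s z)).im)) ≤ 0 := by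
    intro s hs
    apply mul_nonpos_of_nonneg_of_nonpos (Real.exp_nonneg _)
    set w := f s z with hw
    by_cases hw0 : w = 0
    · simp [hw0, h0, Complex.normSq_eq_norm_sq]
    · have hwlt : ‖w‖ < 1 := by
        have := hmem z hz s hs
        simpa [Complex.dist_eq] using this
      have hwpos : 0 < ‖w‖ := norm_pos_iff.mpr hw0
      have hkey := hneg w hwpos hwlt
      have hrew : (v w / w).re = ((v w).re * w.re + (v w).im * w.im) / Complex.normSq w := by
        rw [Complex.div_re]
        ring
      have hnsq : 0 < Complex.normSq w := Complex.normSq_pos.mpr hw0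
      have hineq : (v w).re * w.re + (v w).im * w.im ≤ -c * Complex.normSq w := by
        rw [hrew, div_le_iff₀ hnsq] at hkey
        linarith
      nlinarith [hnsq]
  -- F is antitone on [0, ∞)
  have hcont : ContinuousOn F (Set.Ici (0 : ℝ)) := fun s hs =>
    ((hFderiv s hs).continuousAt).continuousWithinAt
  have hanti : AntitoneOn F (Set.Ici (0 : ℝ)) := by
    apply antitoneOn_of_deriv_nonpos (convex_Ici 0) hcont
    · intro s hs
      rw [interior_Ici] at hs
      exact (hFderiv s (le_of_lt hs)).differentiableAt.differentiableWithinAt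
    · intro s hs
      rw [interior_Ici] at hs
      rw [(hFderiv s (le_of_lt hs)).deriv]
      exact hnonpos s (le_of_lt hs)
  have hFle : F t ≤ F 0 := hanti (Set.self_mem_Ici) ht ht
  have hF0 : F 0 = Complex.normSq z := by simp [hF, hf0 z hz]
  -- convert to the norm inequality
  have hsq : ‖f t z‖ ^ 2 ≤ (Real.exp (-c * t) * ‖z‖) ^ 2 := by
    have h1 : Real.exp (2 * c * t) * ‖f t z‖ ^ 2 ≤ ‖z‖ ^ 2 := by
      rw [hF0] at hFle
      simpa [hF, Complex.normSq_eq_norm_sq] using hFle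
    have hexp_pos : 0 < Real.exp (2 * c * t) := Real.exp_pos _
    have he : Real.exp (-c * t) ^ 2 * Real.exp (2 * c * t) = 1 := by
      rw [← Real.exp_nat_mul, ← Real.exp_add]
      push_cast
      ring_nf
      simp
    rw [mul_pow]
    nlinarith [h1, hexp_pos, sq_nonneg (Real.exp (-c * t)), sq_nonneg ‖z‖]
  calc ‖f t z‖ = Real.sqrt (‖f t z‖ ^ 2) := by rw [Real.sqrt_sq (norm_nonneg _)]
    _ ≤ Real.sqrt ((Real.exp (-c * t) * ‖z‖) ^ 2) := Real.sqrt_le_sqrt hsq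
    _ = Real.exp (-c * t) * ‖z‖ := Real.sqrt_sq (by positivity)
end

section
/- Let v be holomorphic on the open unit disk with Re(conj(z) v(z)) < 0 for |z| = 1 (extended continuously to the boundary), let a in the open unit disk satisfy v(a) = 0, and let ψ(z) = (z - a)/(1 - conj(a) z) be the Möbius automorphism of the disk sending a to 0. Define v_ψ = (ψ' ∘ ψ⁻¹) · (v ∘ ψ⁻¹). Then v_ψ(0) = 0 and Re(conj(z) v_ψ(z)) < 0 for all |z| = 1. -/
open Complex Metric

/-- Conjugating a Markovian vector field by the Möbius automorphism `ψ(z) = (z-a)/(1-ā z)`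
sending its zero `a` to `0` yields a Markovian vector field vanishing at `0`. -/
theorem mobius_conjugated_vector_field_markovian
    (v : ℂ → ℂ) (hv : DifferentiableOn ℂ v (ball (0 : ℂ) 1))
    (hvb : ContinuousOn v (closedBall (0 : ℂ) 1))
    (hb : ∀ z : ℂ, ‖z‖ = 1 → ((starRingEnd ℂ) z * v z).re < 0)
    (a : ℂ) (ha : ‖a‖ < 1) (hva : v a = 0)
    (ψ : ℂ → ℂ) (hψ : ∀ z : ℂ, ψ z = (z - a) / (1 - (starRingEnd ℂ) a * z))
    (ψinv : ℂ → ℂ) (hψinv : ∀ w : ℂ, ψinv w = (w + a) / (1 + (starRingEnd ℂ) a * w))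
    (vψ : ℂ → ℂ) (hvψ : ∀ w : ℂ, vψ w = deriv ψ (ψinv w) * v (ψinv w)) :
    vψ 0 = 0 ∧ ∀ z : ℂ, ‖z‖ = 1 → ((starRingEnd ℂ) z * vψ z).re < 0 := by
  have hψfun : ψ = fun u => (u - a) / (1 - (starRingEnd ℂ) a * u) := funext hψ
  have habs : ‖a‖ < 1 := ha
  have hna : Complex.normSq a < 1 := by
    nlinarith [Complex.sq_norm a, norm_nonneg a]
  have hψinv0 : ψinv 0 = a := by rw [hψinv]; simp
  constructor
  · rw [hvψ, hψinv0, hva, mul_zero]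
  · intro z hz
    have haz : (1 : ℂ) + (starRingEnd ℂ) a * z ≠ 0 := by
      intro h
      have h1 : ‖(starRingEnd ℂ) a * z‖ = ‖a‖ := by
        rw [norm_mul, hz, mul_one]; exact RCLike.norm_conj a
      have h2 : (starRingEnd ℂ) a * z = -1 := by linear_combination h
      rw [h2] at h1
      simp at h1
      rw [show ‖a‖ = 1 by linarith] at ha
      exact lt_irrefl _ ha
    set w := ψinv z with hw
    have hwval : w = (z + a) / (1 + (starRingEnd ℂ) a * z) := hψinv z
    have h1 : z.re * z.re + z.im * z.im = 1 := by
      have := Complex.normSq_eq_norm_sq z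
      rw [hz] at this
      simpa [Complex.normSq_apply] using this
    have hnseq : Complex.normSq (z + a) = Complex.normSq (1 + (starRingEnd ℂ) a * z) := by
      simp only [Complex.normSq_apply, Complex.add_re, Complex.add_im, Complex.mul_re,
        Complex.mul_im, Complex.conj_re, Complex.conj_im, Complex.one_re, Complex.one_im]
      linear_combination (1 - a.re * a.re - a.im * a.im) * h1
    have hwnorm : ‖w‖ = 1 := by
      rw [hwval, norm_div, div_eq_one_iff_eq (by simpa using haz)]
      have : ‖z + a‖ ^ 2 = ‖1 + (starRingEnd ℂ) a * z‖ ^ 2 := by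
        rw [← Complex.normSq_eq_norm_sq,
          ← Complex.normSq_eq_norm_sq]
        exact hnseq
      nlinarith [norm_nonneg (z + a), norm_nonneg (1 + (starRingEnd ℂ) a * z)]
    have hww : w * (starRingEnd ℂ) w = 1 := by
      have h := Complex.mul_conj w
      have h2 : Complex.normSq w = 1 := by
        rw [Complex.normSq_eq_norm_sq, hwnorm]; norm_num
      rw [h, h2, Complex.ofReal_one]
    have haa0 : (1 : ℂ) - (starRingEnd ℂ) a * a ≠ 0 := by
      have : (starRingEnd ℂ) a * a = ((Complex.normSq a : ℝ) : ℂ) := by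
        rw [mul_comm]; exact Complex.mul_conj a
      rw [this, ← Complex.ofReal_one, ← Complex.ofReal_sub]
      exact Complex.ofReal_ne_zero.mpr (by linarith)
    have hdval : (1 : ℂ) - (starRingEnd ℂ) a * w
        = (1 - (starRingEnd ℂ) a * a) / (1 + (starRingEnd ℂ) a * z) := by
      rw [hwval]; field_simp; ring
    have hd0 : (1 : ℂ) - (starRingEnd ℂ) a * w ≠ 0 := by
      rw [hdval]; exact div_ne_zero haa0 haz
    have h2 : w - a = z * ((1 : ℂ) - (starRingEnd ℂ) a * w) := by
      rw [hwval]; rw [mul_comm _ z] at haz; field_simp; ring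
    have hdψ : HasDerivAt ψ
        ((1 - (starRingEnd ℂ) a * a) / ((1 - (starRingEnd ℂ) a * w) ^ 2)) w := by
      rw [hψfun]
      have hnum : HasDerivAt (fun u : ℂ => u - a) 1 w := (hasDerivAt_id w).sub_const a
      have hden : HasDerivAt (fun u : ℂ => 1 - (starRingEnd ℂ) a * u)
          (-((starRingEnd ℂ) a)) w := by
        simpa using ((hasDerivAt_id w).const_mul ((starRingEnd ℂ) a)).const_sub 1
      have h := hnum.div hden hd0
      exact h.congr_deriv (by ring)
    have hderiv : deriv ψ w
        = (1 - (starRingEnd ℂ) a * a) / ((1 - (starRingEnd ℂ) a * w) ^ 2) := hdψ.deriv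
    have h2c : (starRingEnd ℂ) w - (starRingEnd ℂ) a
        = (starRingEnd ℂ) z * ((1 : ℂ) - a * (starRingEnd ℂ) w) := by
      have := congrArg (starRingEnd ℂ) h2
      simpa [map_sub, map_mul, map_one, Complex.conj_conj] using this
    have hkey : (starRingEnd ℂ) z
          * ((1 - (starRingEnd ℂ) a * a) / ((1 - (starRingEnd ℂ) a * w) ^ 2))
        = (starRingEnd ℂ) w
          * ((1 - (starRingEnd ℂ) a * a)
            / ((1 - (starRingEnd ℂ) a * w) * ((1 : ℂ) - a * (starRingEnd ℂ) w))) := by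
      have hD0 : (1 : ℂ) - a * (starRingEnd ℂ) w ≠ 0 := by
        intro h
        apply hd0
        have := congrArg (starRingEnd ℂ) h
        simpa [map_sub, map_mul, map_one, Complex.conj_conj] using this
      have hWd : (starRingEnd ℂ) w - (starRingEnd ℂ) a
          = (starRingEnd ℂ) w * (1 - (starRingEnd ℂ) a * w) := by
        linear_combination (starRingEnd ℂ) a * hww
      have hZ : (starRingEnd ℂ) z
          = (starRingEnd ℂ) w * (1 - (starRingEnd ℂ) a * w) / (1 - a * (starRingEnd ℂ) w) := by
        rw [eq_div_iff hD0]; linear_combination hWd - h2c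
      rw [hZ]
      field_simp
    have hfac : (1 - (starRingEnd ℂ) a * a)
          / ((1 - (starRingEnd ℂ) a * w) * ((1 : ℂ) - a * (starRingEnd ℂ) w))
        = (((1 - Complex.normSq a) / Complex.normSq (1 - (starRingEnd ℂ) a * w) : ℝ) : ℂ) := by
      have e1 : (1 : ℂ) - (starRingEnd ℂ) a * a = ((1 - Complex.normSq a : ℝ) : ℂ) := by
        rw [Complex.ofReal_sub, Complex.ofReal_one, mul_comm, Complex.mul_conj]
      have e2 : (1 - (starRingEnd ℂ) a * w) * ((1 : ℂ) - a * (starRingEnd ℂ) w)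
          = ((Complex.normSq (1 - (starRingEnd ℂ) a * w) : ℝ) : ℂ) := by
        rw [← Complex.mul_conj]
        simp [map_sub, map_mul, map_one, Complex.conj_conj]
      rw [e1, e2, Complex.ofReal_div]
    rw [hvψ z, ← hw, hderiv, ← mul_assoc, hkey, hfac]
    have hr : (0 : ℝ) < (1 - Complex.normSq a) / Complex.normSq (1 - (starRingEnd ℂ) a * w) := by
      apply div_pos (by linarith) (Complex.normSq_pos.mpr hd0)
    have hrw : ((starRingEnd ℂ) w
          * (((1 - Complex.normSq a) / Complex.normSq (1 - (starRingEnd ℂ) a * w) : ℝ) : ℂ)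
          * v w).re
        = ((starRingEnd ℂ) w * v w).re
          * ((1 - Complex.normSq a) / Complex.normSq (1 - (starRingEnd ℂ) a * w)) := by
      rw [mul_comm ((starRingEnd ℂ) w) _, mul_assoc, Complex.re_ofReal_mul, mul_comm]
    rw [hrw]
    exact mul_neg_of_neg_of_pos (hb w hwnorm) hr
end

section
/- Let s ∈ (0, 1/2). There exists C > 0 such that for all φ ∈ (0, π], the symmetric sum satisfies | Σ_{n ∈ ℤ} (1 + |n|)^{-2s} e^{inφ} | ≤ C φ^{2s - 1}. -/
open Complex Filter Topology

lemma SSB.geom_norm_le (z : ℂ) (hz : z ≠ 1) (n : ℕ) :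
    ‖∑ i ∈ Finset.range n, z ^ i‖ ≤ (‖z‖ ^ n + 1) / ‖z - 1‖ := by
  rw [geom_sum_eq hz, norm_div]
  gcongr
  calc ‖z ^ n - 1‖ ≤ ‖z ^ n‖ + ‖(1:ℂ)‖ := norm_sub_le _ _
    _ = ‖z‖ ^ n + 1 := by rw [norm_pow, norm_one]

lemma SSB.abel_norm_le (a : ℕ → ℝ) (ha0 : ∀ n, 0 ≤ a n) (hmono : Antitone a)
    (z : ℂ) (B : ℝ) (hB : ∀ k, ‖∑ j ∈ Finset.range k, z ^ j‖ ≤ B) (m : ℕ) :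
    ‖∑ i ∈ Finset.range m, a i • z ^ i‖ ≤ B * a 0 := by
  have hB0 : 0 ≤ B := le_trans (by simp) (hB 0)
  rcases Nat.eq_zero_or_pos m with rfl | hm
  · simpa using mul_nonneg hB0 (ha0 0)
  rw [Finset.sum_range_by_parts]
  have key : ∀ i, ‖(a (i+1) - a i) • ∑ j ∈ Finset.range (i+1), z ^ j‖ ≤ (a i - a (i+1)) * B := by
    intro i
    rw [norm_smul, Real.norm_eq_abs,
      _root_.abs_of_nonpos (by simpa using hmono (Nat.le_succ i)), neg_sub]
    exact mul_le_mul_of_nonneg_left (hB _) (by simpa using hmono (Nat.le_succ i))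
  have h2 : ‖∑ i ∈ Finset.range (m-1), (a (i+1) - a i) • ∑ j ∈ Finset.range (i+1), z ^ j‖
      ≤ (a 0 - a (m-1)) * B := by
    refine (norm_sum_le _ _).trans ?_
    refine le_of_le_of_eq (Finset.sum_le_sum fun i _ => key i) ?_
    rw [← Finset.sum_mul, Finset.sum_range_sub' a (m-1)]
  have h1 : ‖a (m-1) • ∑ j ∈ Finset.range m, z ^ j‖ ≤ a (m-1) * B := by
    rw [norm_smul, Real.norm_eq_abs, _root_.abs_of_nonneg (ha0 _)]
    exact mul_le_mul_of_nonneg_left (hB _) (ha0 _)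
  calc ‖a (m-1) • ∑ j ∈ Finset.range m, z ^ j -
        ∑ i ∈ Finset.range (m-1), (a (i+1) - a i) • ∑ j ∈ Finset.range (i+1), z ^ j‖
      ≤ a (m-1) * B + (a 0 - a (m-1)) * B := (norm_sub_le _ _).trans (add_le_add h1 h2)
    _ = B * a 0 := by ring

lemma SSB.tail_norm_le (a : ℕ → ℝ) (ha0 : ∀ n, 0 ≤ a n) (hmono : Antitone a)
    (z : ℂ) (hz1 : ‖z‖ = 1) (B : ℝ) (hB : ∀ k, ‖∑ j ∈ Finset.range k, z ^ j‖ ≤ B) (p q : ℕ) :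
    ‖∑ i ∈ Finset.Ico p q, a i • z ^ i‖ ≤ B * a p := by
  rw [Finset.sum_Ico_eq_sum_range]
  have h1 : ∀ i ∈ Finset.range (q - p), a (p + i) • z ^ (p + i)
      = z ^ p * (a (p + i) • z ^ i) := by
    intro i _
    rw [pow_add]
    exact (mul_smul_comm _ _ _).symm
  rw [Finset.sum_congr rfl h1, ← Finset.mul_sum, norm_mul, norm_pow, hz1, one_pow, one_mul]
  exact SSB.abel_norm_le (fun i => a (p + i)) (fun n => ha0 _)
    (fun i j hij => hmono (by omega)) z B hB (q - p)

lemma SSB.mvt_step (s : ℝ) (hs : 0 < s) (hs' : s < 1/2) (M : ℕ) :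
    (1 - 2*s) * (1 + (M:ℝ)) ^ (-(2*s)) ≤ ((M:ℝ)+1) ^ (1-2*s) - (M:ℝ) ^ (1-2*s) := by
  have h1 : (0:ℝ) < 1 - 2*s := by linarith
  have hMlt : (M:ℝ) < (M:ℝ) + 1 := by linarith
  have hcont : ContinuousOn (fun x : ℝ => x ^ (1-2*s)) (Set.Icc (M:ℝ) ((M:ℝ)+1)) := by
    refine Continuous.continuousOn ?_
    rw [continuous_iff_continuousAt]
    exact fun x => Real.continuousAt_rpow_const x _ (Or.inr h1.le)
  have hderiv : ∀ x ∈ Set.Ioo (M:ℝ) ((M:ℝ)+1),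
      HasDerivAt (fun x : ℝ => x ^ (1-2*s)) ((1-2*s) * x ^ (1-2*s-1)) x := by
    intro x hx
    have hx0 : x ≠ 0 := by
      have : (0:ℝ) ≤ (M:ℝ) := Nat.cast_nonneg M
      nlinarith [hx.1]
    exact Real.hasDerivAt_rpow_const (Or.inl hx0)
  obtain ⟨c, hc, hceq⟩ := exists_hasDerivAt_eq_slope _ _ hMlt hcont hderiv
  have hc0 : 0 < c := lt_of_le_of_lt (Nat.cast_nonneg M) hc.1
  have hle : ((M:ℝ)+1) ^ (-(2*s)) ≤ c ^ (-(2*s)) :=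
    Real.rpow_le_rpow_of_nonpos hc0 hc.2.le (by linarith)
  have he : (1-2*s-1) = -(2*s) := by ring
  rw [he] at hceq
  have heq : (1-2*s) * c ^ (-(2*s)) = ((M:ℝ)+1) ^ (1-2*s) - (M:ℝ) ^ (1-2*s) := by
    rw [hceq]; field_simp; ring
  rw [← heq, add_comm 1 (M:ℝ)]
  exact mul_le_mul_of_nonneg_left hle h1.le

lemma SSB.sum_head (s : ℝ) (hs : 0 < s) (hs' : s < 1/2) (M : ℕ) :
    ∑ n ∈ Finset.range M, (1 + (n:ℝ)) ^ (-(2*s)) ≤ (M:ℝ) ^ (1-2*s) / (1-2*s) := by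
  have h1 : (0:ℝ) < 1 - 2*s := by linarith
  induction M with
  | zero => simp [Real.zero_rpow (by linarith : (1:ℝ)-2*s ≠ 0)]
  | succ M ih =>
    rw [Finset.sum_range_succ]
    have key := SSB.mvt_step s hs hs' M
    have h2 : (1 + (M:ℝ)) ^ (-(2*s)) ≤ (((M:ℝ)+1) ^ (1-2*s) - (M:ℝ) ^ (1-2*s)) / (1-2*s) := by
      rw [le_div_iff₀ h1]
      linarith [key]
    push_cast
    calc ∑ n ∈ Finset.range M, (1 + (n:ℝ)) ^ (-(2*s)) + (1 + (M:ℝ)) ^ (-(2*s))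
        ≤ (M:ℝ) ^ (1-2*s) / (1-2*s) + (((M:ℝ)+1) ^ (1-2*s) - (M:ℝ) ^ (1-2*s)) / (1-2*s) :=
          add_le_add ih h2
      _ = ((M:ℝ)+1) ^ (1-2*s) / (1-2*s) := by ring

/-- For `s ∈ (0, 1/2)` there is `C > 0` such that for all `φ ∈ (0, π]` the symmetric sum
`Σ_{n∈ℤ} (1+|n|)^{-2s} e^{inφ}` converges and is bounded by `C φ^{2s-1}`. -/
theorem symmetric_sum_bound (s : ℝ) (hs : 0 < s) (hs' : s < 1/2) :
    ∃ C : ℝ, 0 < C ∧ ∀ φ : ℝ, 0 < φ → φ ≤ Real.pi →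
      ∃ L : ℂ,
        Tendsto (fun N : ℕ => ∑ n ∈ Finset.Icc (-(N : ℤ)) (N : ℤ),
            (((1 + |(n : ℝ)|) ^ (-(2 * s)) : ℝ) : ℂ) * Complex.exp (Complex.I * n * φ))
          atTop (𝓝 L) ∧
        ‖L‖ ≤ C * φ ^ (2 * s - 1) := by
  have hπ := Real.pi_pos
  have h12 : (0:ℝ) < 1 - 2*s := by linarith
  set K : ℝ := (1 + 2*Real.pi)/(1 - 2*s) + Real.pi with hK_def
  have hKpos : 0 < K := by
    have : 0 < (1 + 2*Real.pi)/(1 - 2*s) := div_pos (by linarith) h12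
    rw [hK_def]; linarith
  refine ⟨2*K + Real.pi, by linarith, ?_⟩
  intro φ hφ hφπ
  set z : ℂ := Complex.exp ((φ:ℂ) * Complex.I) with hz_def
  have hz1 : ‖z‖ = 1 := Complex.norm_exp_ofReal_mul_I φ
  have hzne : z ≠ 1 := by
    intro h
    have hre : Real.cos φ = 1 := by
      have := congrArg Complex.re h
      simpa [hz_def, Complex.exp_ofReal_mul_I_re] using this
    rw [Real.cos_eq_one_iff_of_lt_of_lt (by linarith) (by linarith)] at hre
    exact hφ.ne' hre
  have hsin : φ / Real.pi ≤ Real.sin (φ/2) := by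
    have h := Real.mul_le_sin (x := φ/2) (by linarith) (by linarith)
    rw [show φ/Real.pi = 2/Real.pi*(φ/2) by ring]
    exact h
  have hnormsq : ‖z - 1‖^2 = 2 - 2*Real.cos φ := by
    rw [Complex.sq_norm, Complex.normSq_apply]
    simp only [Complex.sub_re, Complex.sub_im, hz_def, Complex.exp_ofReal_mul_I_re,
      Complex.exp_ofReal_mul_I_im, Complex.one_re, Complex.one_im]
    nlinarith [Real.sin_sq_add_cos_sq φ]
  have hsinsq : Real.sin (φ/2)^2 = (1 - Real.cos φ)/2 := by
    rw [Real.sin_sq_eq_half_sub, show 2*(φ/2) = φ by ring]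
    ring
  have hlow : 2*φ/Real.pi ≤ ‖z - 1‖ := by
    have h2 : (2*φ/Real.pi)^2 ≤ ‖z-1‖^2 := by
      rw [hnormsq]
      have h4 : (φ/Real.pi)^2 ≤ Real.sin (φ/2)^2 :=
        pow_le_pow_left₀ (div_nonneg hφ.le hπ.le) hsin 2
      have h5 : (2*φ/Real.pi)^2 = 4*(φ/Real.pi)^2 := by ring
      linarith
    calc 2*φ/Real.pi = Real.sqrt ((2*φ/Real.pi)^2) := (Real.sqrt_sq (by positivity)).symm
      _ ≤ Real.sqrt (‖z-1‖^2) := Real.sqrt_le_sqrt h2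
      _ = ‖z-1‖ := Real.sqrt_sq (norm_nonneg _)
  have hBpos : 0 < Real.pi / φ := by positivity
  have hB : ∀ k, ‖∑ j ∈ Finset.range k, z ^ j‖ ≤ Real.pi/φ := by
    intro k
    refine (SSB.geom_norm_le z hzne k).trans ?_
    rw [hz1, one_pow]
    have h1 : (0:ℝ) < 2*φ/Real.pi := by positivity
    calc (1+1)/‖z-1‖ ≤ (1+1)/(2*φ/Real.pi) :=
          div_le_div_of_nonneg_left (by norm_num) h1 hlow
      _ = Real.pi/φ := by field_simp; ring
  set a : ℕ → ℝ := fun n => (1 + (n:ℝ)) ^ (-(2*s)) with ha_def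
  have ha0 : ∀ n, 0 ≤ a n := fun n => Real.rpow_nonneg (by positivity) _
  have hmono : Antitone a := by
    intro i j hij
    have hc : (i:ℝ) ≤ (j:ℝ) := Nat.cast_le.mpr hij
    exact Real.rpow_le_rpow_of_nonpos (by positivity) (by linarith) (by linarith)
  set T : ℕ → ℂ := fun N => ∑ i ∈ Finset.range N, a i • z ^ i with hT_def
  have hCauchy : CauchySeq T := by
    apply cauchySeq_of_le_tendsto_0 (fun p => (Real.pi/φ) * a p)
    · intro n m N hn hm
      rcases le_total n m with h | h
      · rw [dist_eq_norm, norm_sub_rev]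
        simp only [hT_def]
        rw [← Finset.sum_Ico_eq_sub _ h]
        exact (SSB.tail_norm_le a ha0 hmono z hz1 _ hB n m).trans
          (mul_le_mul_of_nonneg_left (hmono hn) hBpos.le)
      · rw [dist_eq_norm]
        simp only [hT_def]
        rw [← Finset.sum_Ico_eq_sub _ h]
        exact (SSB.tail_norm_le a ha0 hmono z hz1 _ hB m n).trans
          (mul_le_mul_of_nonneg_left (hmono hm) hBpos.le)
    · have h1 : Tendsto (fun p : ℕ => 1 + (p:ℝ)) atTop atTop :=
        tendsto_atTop_add_const_left _ 1 tendsto_natCast_atTop_atTop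
      have h2 : Tendsto a atTop (𝓝 0) :=
        (tendsto_rpow_neg_atTop (by linarith : (0:ℝ) < 2*s)).comp h1
      simpa using h2.const_mul (Real.pi/φ)
  obtain ⟨L₀, hL₀⟩ := cauchySeq_tendsto_of_complete hCauchy
  have hφpow : 0 ≤ φ^(2*s-1) := Real.rpow_nonneg hφ.le _
  set M : ℕ := ⌈1/φ⌉₊ with hM_def
  have hMge : 1/φ ≤ (M:ℝ) := Nat.le_ceil _
  have hφpi : 1 ≤ Real.pi/φ := (one_le_div hφ).mpr hφπ
  have hMle : (M:ℝ) + 1 ≤ (1 + 2*Real.pi)/φ := by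
    have h3 : (M:ℝ) < 1/φ + 1 := Nat.ceil_lt_add_one (by positivity)
    rw [show (1+2*Real.pi)/φ = 1/φ + 2*(Real.pi/φ) by ring]
    linarith
  have hhead : ∑ i ∈ Finset.range (M+1), a i ≤ (1+2*Real.pi)/(1-2*s) * φ^(2*s-1) := by
    refine (SSB.sum_head s hs hs' (M+1)).trans ?_
    have h1 : (((M+1 : ℕ)):ℝ) ^ (1-2*s) ≤ ((1+2*Real.pi)/φ) ^ (1-2*s) :=
      Real.rpow_le_rpow (by positivity) (by push_cast; linarith) (by linarith)
    have h2 : ((1+2*Real.pi)/φ) ^ (1-2*s) = (1+2*Real.pi)^(1-2*s) * φ^(2*s-1) := by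
      rw [Real.div_rpow (by positivity) hφ.le, div_eq_mul_inv, ← Real.rpow_neg hφ.le,
        show -(1-2*s) = 2*s-1 by ring]
    have h3 : (1+2*Real.pi)^(1-2*s) ≤ 1+2*Real.pi := by
      calc (1+2*Real.pi)^(1-2*s) ≤ (1+2*Real.pi)^(1:ℝ) :=
            Real.rpow_le_rpow_of_exponent_le (by linarith) (by linarith)
        _ = 1+2*Real.pi := Real.rpow_one _
    calc (((M+1:ℕ)):ℝ) ^ (1-2*s) / (1-2*s) ≤ ((1+2*Real.pi)/φ) ^ (1-2*s) / (1-2*s) := by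
          rw [div_eq_mul_inv, div_eq_mul_inv]
          exact mul_le_mul_of_nonneg_right h1 (inv_nonneg.mpr h12.le)
      _ = (1+2*Real.pi)^(1-2*s) * φ^(2*s-1) / (1-2*s) := by rw [h2]
      _ ≤ (1+2*Real.pi) * φ^(2*s-1) / (1-2*s) := by
          rw [div_eq_mul_inv, div_eq_mul_inv]
          exact mul_le_mul_of_nonneg_right
            (mul_le_mul_of_nonneg_right h3 hφpow) (inv_nonneg.mpr h12.le)
      _ = (1+2*Real.pi)/(1-2*s) * φ^(2*s-1) := by ring
  have hcase1 : ∀ N, N ≤ M+1 → ‖T N‖ ≤ ∑ i ∈ Finset.range (M+1), a i := by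
    intro N hN
    simp only [hT_def]
    refine (norm_sum_le _ _).trans ?_
    have he : ∀ i ∈ Finset.range N, ‖a i • z^i‖ = a i := by
      intro i _
      rw [norm_smul, norm_pow, hz1, one_pow, mul_one, Real.norm_eq_abs,
        _root_.abs_of_nonneg (ha0 i)]
    rw [Finset.sum_congr rfl he]
    exact Finset.sum_le_sum_of_subset_of_nonneg (Finset.range_subset_range.mpr hN)
      (fun i _ _ => ha0 i)
  have htail : ∀ q, ‖∑ i ∈ Finset.Ico (M+1) q, a i • z^i‖ ≤ Real.pi * φ^(2*s-1) := by
    intro q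
    refine (SSB.tail_norm_le a ha0 hmono z hz1 _ hB (M+1) q).trans ?_
    have hap : a (M+1) ≤ φ^(2*s) := by
      have h0 : (0:ℝ) < 1/φ := by positivity
      calc a (M+1) ≤ (1/φ)^(-(2*s)) :=
            Real.rpow_le_rpow_of_nonpos h0 (by push_cast; linarith) (by linarith)
        _ = φ^(2*s) := by
            rw [one_div, Real.inv_rpow hφ.le, Real.rpow_neg hφ.le, inv_inv]
    calc Real.pi/φ * a (M+1) ≤ Real.pi/φ * φ^(2*s) :=
          mul_le_mul_of_nonneg_left hap hBpos.le
      _ = Real.pi * φ^(2*s-1) := by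
          rw [Real.rpow_sub hφ, Real.rpow_one]; ring
  have hTb : ∀ N, ‖T N‖ ≤ K * φ^(2*s-1) := by
    intro N
    rcases le_total N (M+1) with h | h
    · refine ((hcase1 N h).trans hhead).trans ?_
      rw [hK_def]
      nlinarith [mul_nonneg hπ.le hφpow]
    · have hsplit : T N - T (M+1) = ∑ i ∈ Finset.Ico (M+1) N, a i • z^i := by
        simp only [hT_def]
        rw [Finset.sum_Ico_eq_sub _ h]
      calc ‖T N‖ = ‖T (M+1) + (T N - T (M+1))‖ := by congr 1; ring
        _ ≤ ‖T (M+1)‖ + ‖T N - T (M+1)‖ := norm_add_le _ _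
        _ ≤ (∑ i ∈ Finset.range (M+1), a i) + Real.pi * φ^(2*s-1) := by
            refine add_le_add (hcase1 (M+1) le_rfl) ?_
            rw [hsplit]; exact htail N
        _ ≤ (1+2*Real.pi)/(1-2*s) * φ^(2*s-1) + Real.pi * φ^(2*s-1) :=
            add_le_add hhead le_rfl
        _ = K * φ^(2*s-1) := by rw [hK_def]; ring
  have hL₀b : ‖L₀‖ ≤ K * φ^(2*s-1) :=
    le_of_tendsto hL₀.norm (Filter.Eventually.of_forall hTb)
  have hexp : ∀ n : ℤ, Complex.exp (Complex.I * (n:ℂ) * (φ:ℂ)) = z ^ n := by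
    intro n
    rw [hz_def, ← Complex.exp_int_mul]
    congr 1; push_cast; ring
  have hnz : Complex.normSq z = 1 := by
    have h : ‖z‖ = 1 := by rw [hz1]
    rw [Complex.normSq_eq_norm_sq, h]; norm_num
  have hconj : ∀ k : ℕ, star (z ^ k) = z ^ (-(k:ℤ)) := by
    intro k
    rw [zpow_neg, zpow_natCast]
    refine (inv_eq_of_mul_eq_one_right ?_).symm
    have : (starRingEnd ℂ) (z ^ k) = star (z ^ k) := rfl
    rw [← this, Complex.mul_conj, map_pow, hnz, one_pow]
    norm_num
  have hfpos : ∀ k : ℕ, (((1 + |((k:ℤ):ℝ)|) ^ (-(2*s)) : ℝ) : ℂ)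
      * Complex.exp (Complex.I * ((k:ℤ):ℂ) * φ) = a k • z ^ k := by
    intro k
    rw [hexp, show ((k:ℤ):ℝ) = (k:ℝ) by push_cast; ring,
      _root_.abs_of_nonneg (Nat.cast_nonneg k), zpow_natCast, Complex.real_smul]
  have hfneg : ∀ k : ℕ, (((1 + |((-(k:ℤ)):ℝ)|) ^ (-(2*s)) : ℝ) : ℂ)
      * Complex.exp (Complex.I * ((-(k:ℤ)):ℂ) * φ) = star (a k • z ^ k) := by
    intro k
    have he := hexp (-(k:ℤ))
    push_cast at he ⊢
    rw [he, star_smul, star_trivial, ← hconj k, abs_neg,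
      _root_.abs_of_nonneg (Nat.cast_nonneg k), Complex.real_smul]
  have hiden : ∀ N : ℕ, (∑ n ∈ Finset.Icc (-(N:ℤ)) (N:ℤ),
      (((1 + |(n:ℝ)|) ^ (-(2*s)) : ℝ) : ℂ) * Complex.exp (Complex.I * n * φ))
      = T (N+1) + star (T (N+1)) - 1 := by
    intro N
    induction N with
    | zero =>
      have h0 := hfpos 0
      simp only [Nat.cast_zero, neg_zero, Finset.Icc_self, Finset.sum_singleton]
      push_cast at h0 ⊢
      rw [h0]
      simp [hT_def, ha_def, star_smul]
    | succ N ih =>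
      have hins : Finset.Icc (-(((N+1:ℕ)):ℤ)) (((N+1:ℕ)):ℤ)
          = insert (-(((N+1:ℕ)):ℤ)) (insert (((N+1:ℕ)):ℤ) (Finset.Icc (-(N:ℤ)) (N:ℤ))) := by
        ext x
        simp only [Finset.mem_Icc, Finset.mem_insert]
        push_cast
        omega
      rw [hins, Finset.sum_insert (by simp only [Finset.mem_insert, Finset.mem_Icc]; push_cast; omega),
        Finset.sum_insert (by simp only [Finset.mem_Icc]; push_cast; omega), ih]
      have hp := hfpos (N+1)
      have hn := hfneg (N+1)
      push_cast at hp hn ⊢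
      rw [hp, hn]
      simp only [hT_def]
      rw [Finset.sum_range_succ (fun i => a i • z ^ i) (N+1), star_add]
      ring
  refine ⟨L₀ + star L₀ - 1, ?_, ?_⟩
  · have hTend : Tendsto (fun N : ℕ => T (N+1)) atTop (𝓝 L₀) :=
      hL₀.comp (tendsto_add_atTop_nat 1)
    have hT2 : Tendsto (fun N : ℕ => T (N+1) + star (T (N+1)) - 1) atTop
        (𝓝 (L₀ + star L₀ - 1)) := (hTend.add hTend.star).sub tendsto_const_nhds
    exact hT2.congr (fun N => (hiden N).symm)
  · have h1 : ‖L₀ + star L₀ - 1‖ ≤ ‖L₀‖ + ‖L₀‖ + 1 := by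
      calc ‖L₀ + star L₀ - 1‖ ≤ ‖L₀ + star L₀‖ + ‖(1:ℂ)‖ := norm_sub_le _ _
        _ ≤ ‖L₀‖ + ‖star L₀‖ + ‖(1:ℂ)‖ := add_le_add_left (norm_add_le _ _) _
        _ = ‖L₀‖ + ‖L₀‖ + 1 := by rw [norm_star, norm_one]
    have hone : 1 ≤ Real.pi * φ^(2*s-1) := by
      have hp1 : (1:ℝ) ≤ Real.pi := by linarith [Real.pi_gt_three]
      have ha1 : Real.pi^(2*s-1) ≤ φ^(2*s-1) :=
        Real.rpow_le_rpow_of_nonpos hφ hφπ (by linarith)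
      have ha2 : Real.pi^(-1:ℝ) ≤ Real.pi^(2*s-1) :=
        Real.rpow_le_rpow_of_exponent_le hp1 (by linarith)
      calc (1:ℝ) = Real.pi * Real.pi⁻¹ := (mul_inv_cancel₀ (by linarith)).symm
        _ = Real.pi * Real.pi^(-1:ℝ) := by rw [Real.rpow_neg_one]
        _ ≤ Real.pi * Real.pi^(2*s-1) := mul_le_mul_of_nonneg_left ha2 hπ.le
        _ ≤ Real.pi * φ^(2*s-1) := mul_le_mul_of_nonneg_left ha1 hπ.le
    calc ‖L₀ + star L₀ - 1‖ ≤ ‖L₀‖ + ‖L₀‖ + 1 := h1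
      _ ≤ K*φ^(2*s-1) + K*φ^(2*s-1) + Real.pi * φ^(2*s-1) :=
          add_le_add (add_le_add hL₀b hL₀b) hone
      _ = (2*K + Real.pi) * φ^(2*s-1) := by ring
end
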